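/- arXiv:1703.07616 — 2 statements merged into one kernel-verified Lean document; each statement's English description precedes it below -/
import Mathlib

section
/- Let $(\Omega_+,\mu_+)$ and $(\Gamma,\mu_\Gamma)$ be finite measure spaces with positive total masses $V_+ > 0$ and $V_\Gamma > 0$. Let $u_+ \in L^2(\mu_+)$, $u_\Gamma, t_+ \in L^2(\mu_\Gamma)$, let $G_+ \geq 0$, and denote $\bar{u}_+ := \frac{1}{V_+}\int u_+\,d\mu_+$ and $\bar{u}_\Gamma := \frac{1}{V_\Gamma}\int u_\Gamma\,d\mu_\Gamma$. Assume there is a constant $C_+^\Gamma > 0$ such that for every $c \in \mathbb{R}$, $\|u_+ - c\|_{L^2(\mu_+)}^2 \leq C_+^\Gamma \big( G_+ + \frac{1}{V_\Gamma}\big|\int_\Gamma (t_+ - c)\,d\mu_\Gamma\big|^2 \big)$. Then $(\bar{u}_+ - \bar{u}_\Gamma)^2 \leq \frac{C_+^\Gamma}{V_+}\big( G_+ + \|t_+ - u_\Gamma\|_{L^2(\mu_\Gamma)}^2 \big)$. -/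
/-!
Averaging `u₊ - ū_Γ` over `Ω₊` gives `ū₊ - ū_Γ`, so by Cauchy–Schwarz `V₊ (ū₊ - ū_Γ)² ≤ ‖u₊ - ū_Γ‖²`.
The Poincaré–trace inequality at `c = ū_Γ` bounds this by `C (G₊ + |∫_Γ (t₊ - ū_Γ)|² / V_Γ)`, and
`∫_Γ (t₊ - ū_Γ) = ∫_Γ (t₊ - u_Γ)` because `ū_Γ` is the mean of `u_Γ`; a second Cauchy–Schwarz on `Γ`
bounds the trace term by `‖t₊ - u_Γ‖²`.
-/

open MeasureTheory

section CauchySchwarz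

variable {α : Type*} [MeasurableSpace α] {μ : Measure α} [IsFiniteMeasure μ]

lemma integral_sub_const_eq {f : α → ℝ} (hf : Integrable f μ) (c : ℝ) :
    ∫ x, (f x - c) ∂μ = ∫ x, f x ∂μ - μ.real Set.univ * c := by
  rw [integral_sub hf (integrable_const c), integral_const, smul_eq_mul]

lemma sq_integral_div_measureReal_univ_le_integral_sq {f : α → ℝ} (hf : MemLp f 2 μ) :
    (∫ x, f x ∂μ) ^ 2 / μ.real Set.univ ≤ ∫ x, f x ^ 2 ∂μ := by
  rcases eq_zero_or_neZero μ with rfl | _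
  · simp
  have hV : 0 < μ.real Set.univ := measureReal_univ_pos
  have hJensen : (⨍ x, f x ∂μ) ^ 2 ≤ ⨍ x, f x ^ 2 ∂μ :=
    (even_two.convexOn_pow (𝕜 := ℝ)).map_average_le (continuous_pow 2).continuousOn
      isClosed_univ (by simp) (hf.integrable one_le_two) hf.integrable_sq
  rw [average_eq, average_eq, smul_eq_mul, smul_eq_mul] at hJensen
  calc (∫ x, f x ∂μ) ^ 2 / μ.real Set.univ
      = μ.real Set.univ * ((μ.real Set.univ)⁻¹ * ∫ x, f x ∂μ) ^ 2 := by field_simp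
    _ ≤ μ.real Set.univ * ((μ.real Set.univ)⁻¹ * ∫ x, f x ^ 2 ∂μ) := by gcongr
    _ = ∫ x, f x ^ 2 ∂μ := by field_simp

end CauchySchwarz

theorem average_difference_trace_estimate_general
    {Ωp Γ : Type*} [MeasurableSpace Ωp] [MeasurableSpace Γ]
    (μp : Measure Ωp) (μg : Measure Γ)
    [IsFiniteMeasure μp] [IsFiniteMeasure μg]
    (Vp Vg : ℝ)
    (hVp_def : Vp = (μp Set.univ).toReal) (hVg_def : Vg = (μg Set.univ).toReal)
    (hVp : 0 < Vp) (hVg : 0 < Vg)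
    (up : Ωp → ℝ) (ug tp : Γ → ℝ)
    (hup : MemLp up 2 μp) (hug : MemLp ug 2 μg) (htp : MemLp tp 2 μg)
    (Gp : ℝ)
    (ubp ubg : ℝ)
    (hubp : ubp = (1 / Vp) * ∫ x, up x ∂μp)
    (hubg : ubg = (1 / Vg) * ∫ y, ug y ∂μg)
    (CpG : ℝ) (hCpG : 0 < CpG)
    (hTrace : ∀ c : ℝ, (∫ x, (up x - c) ^ 2 ∂μp)
      ≤ CpG * (Gp + (1 / Vg) * |∫ y, (tp y - c) ∂μg| ^ 2)) :
    (ubp - ubg) ^ 2 ≤ (CpG / Vp) * (Gp + ∫ y, (tp y - ug y) ^ 2 ∂μg) := by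
  rw [← measureReal_def] at hVp_def hVg_def
  have hbulk : (ubp - ubg) ^ 2 ≤ (∫ x, (up x - ubg) ^ 2 ∂μp) / Vp := by
    have hmean : ubp - ubg = (∫ x, (up x - ubg) ∂μp) / Vp := by
      rw [integral_sub_const_eq (hup.integrable one_le_two), ← hVp_def, hubp]
      field_simp
    rw [hmean, div_pow, sq Vp, ← div_div]
    gcongr
    rw [hVp_def]
    exact sq_integral_div_measureReal_univ_le_integral_sq
      (hup.sub (memLp_const ubg) : MemLp (fun x => up x - ubg) 2 μp)
  have hinterface : (1 / Vg) * |∫ y, (tp y - ubg) ∂μg| ^ 2 ≤ ∫ y, (tp y - ug y) ^ 2 ∂μg := by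
    have hshift : ∫ y, (tp y - ubg) ∂μg = ∫ y, (tp y - ug y) ∂μg := by
      rw [integral_sub_const_eq (htp.integrable one_le_two), ← hVg_def, hubg,
        integral_sub (htp.integrable one_le_two) (hug.integrable one_le_two)]
      field_simp
    rw [hshift, sq_abs, one_div_mul_eq_div, hVg_def]
    exact sq_integral_div_measureReal_univ_le_integral_sq
      (htp.sub hug : MemLp (fun y => tp y - ug y) 2 μg)
  calc (ubp - ubg) ^ 2 ≤ (∫ x, (up x - ubg) ^ 2 ∂μp) / Vp := hbulk
    _ ≤ CpG * (Gp + (1 / Vg) * |∫ y, (tp y - ubg) ∂μg| ^ 2) / Vp := by gcongr; exact hTrace ubg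
    _ ≤ CpG * (Gp + ∫ y, (tp y - ug y) ^ 2 ∂μg) / Vp := by gcongr
    _ = (CpG / Vp) * (Gp + ∫ y, (tp y - ug y) ^ 2 ∂μg) := by ring

theorem average_difference_trace_estimate
    {Ωp Γ : Type*} [MeasurableSpace Ωp] [MeasurableSpace Γ]
    (μp : Measure Ωp) (μg : Measure Γ)
    [IsFiniteMeasure μp] [IsFiniteMeasure μg]
    (Vp Vg : ℝ)
    (hVp_def : Vp = (μp Set.univ).toReal) (hVg_def : Vg = (μg Set.univ).toReal)
    (hVp : 0 < Vp) (hVg : 0 < Vg)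
    (up : Ωp → ℝ) (ug tp : Γ → ℝ)
    (hup : MemLp up 2 μp) (hug : MemLp ug 2 μg) (htp : MemLp tp 2 μg)
    (Gp : ℝ) (hGp : 0 ≤ Gp)
    (ubp ubg : ℝ)
    (hubp : ubp = (1 / Vp) * ∫ x, up x ∂μp)
    (hubg : ubg = (1 / Vg) * ∫ y, ug y ∂μg)
    (CpG : ℝ) (hCpG : 0 < CpG)
    (hTrace : ∀ c : ℝ, (∫ x, (up x - c) ^ 2 ∂μp)
      ≤ CpG * (Gp + (1 / Vg) * |∫ y, (tp y - c) ∂μg| ^ 2)) :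
    (ubp - ubg) ^ 2 ≤ (CpG / Vp) * (Gp + ∫ y, (tp y - ug y) ^ 2 ∂μg) :=
  average_difference_trace_estimate_general μp μg Vp Vg hVp_def hVg_def hVp hVg up ug tp hup hug htp
    Gp ubp ubg hubp hubg CpG hCpG hTrace
end

section
/- Let $d \geq 1$, let $\Omega_+, \Omega_- \subseteq \mathbb{R}^d$ be nonempty connected open sets, let $\Gamma \subseteq \overline{\Omega_+} \cap \overline{\Omega_-}$ be a Borel set, and let $\mu_\Gamma$ be a nonzero finite Borel measure on $\Gamma$. Let $\varphi_\pm : \overline{\Omega_\pm} \to \mathbb{R}$ be continuous on $\overline{\Omega_\pm}$ and continuously differentiable on $\Omega_\pm$, and let $\varphi_\Gamma : \Gamma \to \mathbb{R}$ be measurable. Let $k_\pm : \Omega_\pm \to \mathbb{R}^{d\times d}$ satisfy the ellipticity condition $x \cdot k_\pm(y) x \geq \underline{k}|x|^2$ for some $\underline{k} > 0$, all $x \in \mathbb{R}^d$ and all $y \in \Omega_\pm$, and let $m_+, m_-, m_\Gamma : \Gamma \to \mathbb{R}$ be measurable with $m_- \geq 0$ $\mu_\Gamma$-a.e. and $m_+,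 m_\Gamma \geq \underline{m}$ $\mu_\Gamma$-a.e. for some $\underline{m} > 0$. Assume all the following integrands are integrable (with respect to Lebesgue measure on $\Omega_\pm$ and $\mu_\Gamma$ on $\Gamma$) and that $\int_{\Omega_+} \nabla\varphi_+ \cdot k_+ \nabla\varphi_+ \,dx + \int_{\Omega_-} \nabla\varphi_- \cdot k_- \nabla\varphi_- \,dx + \int_\Gamma \big( m_+(\varphi_+ - \varphi_\Gamma)^2 + m_-(\varphi_- - \varphi_\Gamma)^2 + m_\Gamma(\varphi_+ - \varphi_-)^2 \big)\,d\mu_\Gamma = 0$. Then there is a constant $c \in \mathbb{R}$ such that $\varphi_+ \equiv c$ on $\overline{\Omega_+}$, $\varphi_- \equiv c$ on $\overline{\Omega_-}$, and $\varphi_\Gamma = c$ $\mu_\Gamma$-almost everywhere on $\Gamma$. -/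
/-!
All three terms of the form are nonnegative, so each vanishes. Coercivity of `k±` turns
`∫ ∇φ± · k± ∇φ± = 0` into `∇φ± = 0` a.e. on `Ω±`, hence everywhere on the open set `Ω±` since
the gradient is continuous; so `φ±` is constant on the connected set `Ω±` and, by continuity,
on its closure. With `m₊, m_Γ > 0` and `m₋ ≥ 0` the transmission term forces
`φ₊ = φ_Γ = φ₋` `μ_Γ`-a.e.; as `μ_Γ ≠ 0` is carried by `Γ ⊆ closure Ω₊ ∩ closure Ω₋`, one such
point identifies the two constants.
-/

open MeasureTheory Matrix

section Gradient

variable {F : Type*} [NormedAddCommGroup F] [InnerProductSpace ℝ F] [CompleteSpace F]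
  {f : F → ℝ} {s : Set F}

theorem fderiv_eq_zero_iff_gradient_eq_zero {x : F} : fderiv ℝ f x = 0 ↔ gradient f x = 0 := by
  rw [← toDual_gradient, LinearIsometryEquiv.map_eq_zero_iff]

theorem ContDiffOn.continuousOn_gradient (hf : ContDiffOn ℝ 1 f s) (hs : IsOpen s) :
    ContinuousOn (gradient f) s :=
  (InnerProductSpace.toDual ℝ F).symm.continuous.comp_continuousOn
    (hf.continuousOn_fderiv_of_isOpen hs le_rfl)

theorem IsOpen.exists_eq_on_closure_of_gradient_eq_zero (hs : IsOpen s) (hs' : IsPreconnected s)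
    (hf : DifferentiableOn ℝ f s) (hfc : ContinuousOn f (closure s))
    (hgrad : s.EqOn (gradient f) 0) : ∃ c, ∀ x ∈ closure s, f x = c := by
  obtain ⟨c, hc⟩ := hs.exists_is_const_of_fderiv_eq_zero hs' hf fun x hx =>
    fderiv_eq_zero_iff_gradient_eq_zero.2 (hgrad hx)
  exact ⟨c, Set.EqOn.of_subset_closure hc hfc continuousOn_const subset_closure subset_rfl⟩

end Gradient

theorem Matrix.dotProduct_mulVec_self_nonneg_of_coercive {n : Type*} [Fintype n]
    {A : Matrix n n ℝ} {k₀ : ℝ} (hk₀ : 0 ≤ k₀)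
    (hA : ∀ x : n → ℝ, k₀ * (∑ i, x i ^ 2) ≤ x ⬝ᵥ (A *ᵥ x)) (x : n → ℝ) :
    0 ≤ x ⬝ᵥ (A *ᵥ x) :=
  le_trans (by positivity) (hA x)

theorem Matrix.eq_zero_of_coercive_of_dotProduct_mulVec_self_eq_zero {n : Type*} [Fintype n]
    {A : Matrix n n ℝ} {k₀ : ℝ} (hk₀ : 0 < k₀)
    (hA : ∀ x : n → ℝ, k₀ * (∑ i, x i ^ 2) ≤ x ⬝ᵥ (A *ᵥ x)) {x : n → ℝ}
    (hx : x ⬝ᵥ (A *ᵥ x) = 0) : x = 0 := by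
  have hsum : ∑ i, x i ^ 2 = 0 :=
    le_antisymm (nonpos_of_mul_nonpos_right (hx ▸ hA x) hk₀) (by positivity)
  funext i
  exact pow_eq_zero_iff two_ne_zero |>.1 <|
    congrFun ((Fintype.sum_eq_zero_iff_of_nonneg fun i => sq_nonneg (x i)).1 hsum) i

theorem eq_and_eq_of_weighted_sq_sum_eq_zero {a b c p q r : ℝ} (hp : 0 < p) (hq : 0 ≤ q)
    (hr : 0 < r) (h : p * (a - c) ^ 2 + q * (b - c) ^ 2 + r * (a - b) ^ 2 = 0) :
    a = c ∧ a = b := by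
  obtain ⟨⟨hac, -⟩, hab⟩ := (add_eq_zero_iff_of_nonneg (by positivity) (by positivity)).1 h
    |>.imp_left (add_eq_zero_iff_of_nonneg (by positivity) (by positivity)).1
  exact ⟨by simpa [hp.ne', sub_eq_zero] using hac, by simpa [hr.ne', sub_eq_zero] using hab⟩

section Bulk

variable {d : ℕ} {Ω : Set (EuclideanSpace ℝ (Fin d))} {φ : EuclideanSpace ℝ (Fin d) → ℝ}
  {k : EuclideanSpace ℝ (Fin d) → Matrix (Fin d) (Fin d) ℝ} {k₀ : ℝ}

noncomputable def bulkEnergyDensity (k : EuclideanSpace ℝ (Fin d) → Matrix (Fin d) (Fin d) ℝ)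
    (φ : EuclideanSpace ℝ (Fin d) → ℝ) (x : EuclideanSpace ℝ (Fin d)) : ℝ :=
  (EuclideanSpace.equiv (Fin d) ℝ (gradient φ x)) ⬝ᵥ
    (k x *ᵥ (EuclideanSpace.equiv (Fin d) ℝ (gradient φ x)))

theorem setIntegral_bulkEnergyDensity_nonneg (hΩ : MeasurableSet Ω) (hk₀ : 0 ≤ k₀)
    (hk : ∀ y ∈ Ω, ∀ x : Fin d → ℝ, k₀ * (∑ i, x i ^ 2) ≤ x ⬝ᵥ (k y *ᵥ x)) :
    0 ≤ ∫ x in Ω, bulkEnergyDensity k φ x :=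
  setIntegral_nonneg hΩ fun y hy => dotProduct_mulVec_self_nonneg_of_coercive hk₀ (hk y hy) _

theorem eqOn_gradient_zero_of_setIntegral_bulkEnergyDensity_eq_zero (hΩ : IsOpen Ω)
    (hφ : ContDiffOn ℝ 1 φ Ω) (hk₀ : 0 < k₀)
    (hk : ∀ y ∈ Ω, ∀ x : Fin d → ℝ, k₀ * (∑ i, x i ^ 2) ≤ x ⬝ᵥ (k y *ᵥ x))
    (hint : IntegrableOn (bulkEnergyDensity k φ) Ω volume)
    (hzero : ∫ x in Ω, bulkEnergyDensity k φ x = 0) :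
    Ω.EqOn (gradient φ) 0 := by
  have hnonneg : 0 ≤ᵐ[volume.restrict Ω] bulkEnergyDensity k φ :=
    (ae_restrict_iff' hΩ.measurableSet).2 <| .of_forall fun y hy =>
      dotProduct_mulVec_self_nonneg_of_coercive hk₀.le (hk y hy) _
  have hdensity := (setIntegral_eq_zero_iff_of_nonneg_ae hnonneg hint).1 hzero
  have hgrad : gradient φ =ᵐ[volume.restrict Ω] 0 := by
    filter_upwards [hdensity, ae_restrict_mem hΩ.measurableSet] with y hy hyΩ
    exact (EuclideanSpace.equiv (Fin d) ℝ).map_eq_zero_iff.1 <|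
      eq_zero_of_coercive_of_dotProduct_mulVec_self_eq_zero hk₀ (hk y hyΩ) hy
  exact Measure.eqOn_open_of_ae_eq hgrad hΩ (hφ.continuousOn_gradient hΩ) continuousOn_const

theorem exists_eq_on_closure_of_setIntegral_bulkEnergyDensity_eq_zero (hΩ : IsOpen Ω)
    (hΩ' : IsPreconnected Ω) (hφc : ContinuousOn φ (closure Ω)) (hφ : ContDiffOn ℝ 1 φ Ω)
    (hk₀ : 0 < k₀) (hk : ∀ y ∈ Ω, ∀ x : Fin d → ℝ, k₀ * (∑ i, x i ^ 2) ≤ x ⬝ᵥ (k y *ᵥ x))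
    (hint : IntegrableOn (bulkEnergyDensity k φ) Ω volume)
    (hzero : ∫ x in Ω, bulkEnergyDensity k φ x = 0) :
    ∃ c, ∀ x ∈ closure Ω, φ x = c :=
  hΩ.exists_eq_on_closure_of_gradient_eq_zero hΩ' (hφ.differentiableOn one_ne_zero) hφc <|
    eqOn_gradient_zero_of_setIntegral_bulkEnergyDensity_eq_zero hΩ hφ hk₀ hk hint hzero

end Bulk

section Interface

variable {α : Type*} [MeasurableSpace α] {μ : Measure α} {mp mm mg φp φm φg : α → ℝ}

def interfaceEnergyDensity (mp mm mg φp φm φg : α → ℝ) (y : α) : ℝ :=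
  mp y * (φp y - φg y) ^ 2 + mm y * (φm y - φg y) ^ 2 + mg y * (φp y - φm y) ^ 2

theorem interfaceEnergyDensity_nonneg_ae (hmp : ∀ᵐ y ∂μ, 0 ≤ mp y) (hmm : ∀ᵐ y ∂μ, 0 ≤ mm y)
    (hmg : ∀ᵐ y ∂μ, 0 ≤ mg y) : 0 ≤ᵐ[μ] interfaceEnergyDensity mp mm mg φp φm φg := by
  filter_upwards [hmp, hmm, hmg] with y hp hm hg
  unfold interfaceEnergyDensity
  positivity

theorem ae_eq_of_integral_interfaceEnergyDensity_eq_zero (hmp : ∀ᵐ y ∂μ, 0 < mp y)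
    (hmm : ∀ᵐ y ∂μ, 0 ≤ mm y) (hmg : ∀ᵐ y ∂μ, 0 < mg y)
    (hint : Integrable (interfaceEnergyDensity mp mm mg φp φm φg) μ)
    (hzero : ∫ y, interfaceEnergyDensity mp mm mg φp φm φg y ∂μ = 0) :
    ∀ᵐ y ∂μ, φp y = φg y ∧ φp y = φm y := by
  have hnonneg := interfaceEnergyDensity_nonneg_ae (φp := φp) (φm := φm) (φg := φg)
    (hmp.mono fun _ => le_of_lt) hmm (hmg.mono fun _ => le_of_lt)
  filter_upwards [(integral_eq_zero_iff_of_nonneg_ae hnonneg hint).1 hzero, hmp, hmm, hmg]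
    with y hy hp hm hg
  exact eq_and_eq_of_weighted_sq_sum_eq_zero hp hm hg hy

end Interface

theorem dissipation_form_kernel_characterization_general
    (d : ℕ)
    (Ωp Ωm : Set (EuclideanSpace ℝ (Fin d)))
    (hΩp_open : IsOpen Ωp) (hΩp_conn : IsConnected Ωp)
    (hΩm_open : IsOpen Ωm) (hΩm_conn : IsConnected Ωm)
    (Γ : Set (EuclideanSpace ℝ (Fin d)))
    (hΓ : Γ ⊆ closure Ωp ∩ closure Ωm)
    (μg : Measure (EuclideanSpace ℝ (Fin d)))
    (hμg_ne : μg ≠ 0) (hμg_supp : μg Γᶜ = 0)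
    (φp φm φg : EuclideanSpace ℝ (Fin d) → ℝ)
    (hφp_cont : ContinuousOn φp (closure Ωp)) (hφp_diff : ContDiffOn ℝ 1 φp Ωp)
    (hφm_cont : ContinuousOn φm (closure Ωm)) (hφm_diff : ContDiffOn ℝ 1 φm Ωm)
    (kp km : EuclideanSpace ℝ (Fin d) → Matrix (Fin d) (Fin d) ℝ)
    (k₀ : ℝ) (hk₀ : 0 < k₀)
    (hkp : ∀ y ∈ Ωp, ∀ x : Fin d → ℝ, k₀ * (∑ i, x i ^ 2) ≤ x ⬝ᵥ (kp y *ᵥ x))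
    (hkm : ∀ y ∈ Ωm, ∀ x : Fin d → ℝ, k₀ * (∑ i, x i ^ 2) ≤ x ⬝ᵥ (km y *ᵥ x))
    (mp mm mg : EuclideanSpace ℝ (Fin d) → ℝ)
    (m₀ : ℝ) (hm₀ : 0 < m₀)
    (hmm : ∀ᵐ y ∂μg, 0 ≤ mm y)
    (hmp : ∀ᵐ y ∂μg, m₀ ≤ mp y)
    (hmg : ∀ᵐ y ∂μg, m₀ ≤ mg y)
    (hint_p : IntegrableOn (fun x =>
      (EuclideanSpace.equiv (Fin d) ℝ (gradient φp x)) ⬝ᵥ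
        (kp x *ᵥ (EuclideanSpace.equiv (Fin d) ℝ (gradient φp x)))) Ωp volume)
    (hint_m : IntegrableOn (fun x =>
      (EuclideanSpace.equiv (Fin d) ℝ (gradient φm x)) ⬝ᵥ
        (km x *ᵥ (EuclideanSpace.equiv (Fin d) ℝ (gradient φm x)))) Ωm volume)
    (hint_g : Integrable (fun y =>
      mp y * (φp y - φg y) ^ 2 + mm y * (φm y - φg y) ^ 2 + mg y * (φp y - φm y) ^ 2) μg)
    (hzero :
      (∫ x in Ωp, (EuclideanSpace.equiv (Fin d) ℝ (gradient φp x)) ⬝ᵥ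
        (kp x *ᵥ (EuclideanSpace.equiv (Fin d) ℝ (gradient φp x))))
      + (∫ x in Ωm, (EuclideanSpace.equiv (Fin d) ℝ (gradient φm x)) ⬝ᵥ
        (km x *ᵥ (EuclideanSpace.equiv (Fin d) ℝ (gradient φm x))))
      + (∫ y, (mp y * (φp y - φg y) ^ 2 + mm y * (φm y - φg y) ^ 2
          + mg y * (φp y - φm y) ^ 2) ∂μg) = 0) :
    ∃ c : ℝ, (∀ x ∈ closure Ωp, φp x = c) ∧ (∀ x ∈ closure Ωm, φm x = c) ∧
      (∀ᵐ y ∂μg, φg y = c) := by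
  change (∫ x in Ωp, bulkEnergyDensity kp φp x) + (∫ x in Ωm, bulkEnergyDensity km φm x)
    + ∫ y, interfaceEnergyDensity mp mm mg φp φm φg y ∂μg = 0 at hzero
  have hIp := setIntegral_bulkEnergyDensity_nonneg (φ := φp) hΩp_open.measurableSet hk₀.le hkp
  have hIm := setIntegral_bulkEnergyDensity_nonneg (φ := φm) hΩm_open.measurableSet hk₀.le hkm
  have hIg := integral_nonneg_of_ae <| interfaceEnergyDensity_nonneg_ae (φp := φp) (φm := φm)
    (φg := φg) (hmp.mono fun _ => hm₀.le.trans) hmm (hmg.mono fun _ => hm₀.le.trans)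
  obtain ⟨cp, hcp⟩ := exists_eq_on_closure_of_setIntegral_bulkEnergyDensity_eq_zero hΩp_open
    hΩp_conn.isPreconnected hφp_cont hφp_diff hk₀ hkp hint_p (by linarith)
  obtain ⟨cm, hcm⟩ := exists_eq_on_closure_of_setIntegral_bulkEnergyDensity_eq_zero hΩm_open
    hΩm_conn.isPreconnected hφm_cont hφm_diff hk₀ hkm hint_m (by linarith)
  have hinterface := ae_eq_of_integral_interfaceEnergyDensity_eq_zero
    (hmp.mono fun _ => hm₀.trans_le) hmm (hmg.mono fun _ => hm₀.trans_le) hint_g (by linarith)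
  have hΓ_ae : ∀ᵐ y ∂μg, y ∈ Γ := mem_ae_iff.2 hμg_supp
  have := ae_neBot.2 hμg_ne
  obtain ⟨y₀, hy₀Γ, -, hy₀⟩ := (hΓ_ae.and hinterface).exists
  have hc : cm = cp := by rw [← hcp y₀ (hΓ hy₀Γ).1, ← hcm y₀ (hΓ hy₀Γ).2, hy₀]
  refine ⟨cp, hcp, hc ▸ hcm, ?_⟩
  filter_upwards [hΓ_ae, hinterface] with y hyΓ hy
  rw [← hy.1, hcp y (hΓ hyΓ).1]

theorem dissipation_form_kernel_characterization
    (d : ℕ) (hd : 1 ≤ d)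
    (Ωp Ωm : Set (EuclideanSpace ℝ (Fin d)))
    (hΩp_open : IsOpen Ωp) (hΩp_conn : IsConnected Ωp)
    (hΩm_open : IsOpen Ωm) (hΩm_conn : IsConnected Ωm)
    (Γ : Set (EuclideanSpace ℝ (Fin d)))
    (hΓ : Γ ⊆ closure Ωp ∩ closure Ωm) (hΓ_meas : MeasurableSet Γ)
    (μg : Measure (EuclideanSpace ℝ (Fin d))) [IsFiniteMeasure μg]
    (hμg_ne : μg ≠ 0) (hμg_supp : μg Γᶜ = 0)
    (φp φm φg : EuclideanSpace ℝ (Fin d) → ℝ)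
    (hφp_cont : ContinuousOn φp (closure Ωp)) (hφp_diff : ContDiffOn ℝ 1 φp Ωp)
    (hφm_cont : ContinuousOn φm (closure Ωm)) (hφm_diff : ContDiffOn ℝ 1 φm Ωm)
    (hφg_meas : Measurable φg)
    (kp km : EuclideanSpace ℝ (Fin d) → Matrix (Fin d) (Fin d) ℝ)
    (k₀ : ℝ) (hk₀ : 0 < k₀)
    (hkp : ∀ y ∈ Ωp, ∀ x : Fin d → ℝ, k₀ * (∑ i, x i ^ 2) ≤ x ⬝ᵥ (kp y *ᵥ x))
    (hkm : ∀ y ∈ Ωm, ∀ x : Fin d → ℝ, k₀ * (∑ i, x i ^ 2) ≤ x ⬝ᵥ (km y *ᵥ x))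
    (mp mm mg : EuclideanSpace ℝ (Fin d) → ℝ)
    (m₀ : ℝ) (hm₀ : 0 < m₀)
    (hmm : ∀ᵐ y ∂μg, 0 ≤ mm y)
    (hmp : ∀ᵐ y ∂μg, m₀ ≤ mp y)
    (hmg : ∀ᵐ y ∂μg, m₀ ≤ mg y)
    (hint_p : IntegrableOn (fun x =>
      (EuclideanSpace.equiv (Fin d) ℝ (gradient φp x)) ⬝ᵥ
        (kp x *ᵥ (EuclideanSpace.equiv (Fin d) ℝ (gradient φp x)))) Ωp volume)
    (hint_m : IntegrableOn (fun x =>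
      (EuclideanSpace.equiv (Fin d) ℝ (gradient φm x)) ⬝ᵥ
        (km x *ᵥ (EuclideanSpace.equiv (Fin d) ℝ (gradient φm x)))) Ωm volume)
    (hint_g : Integrable (fun y =>
      mp y * (φp y - φg y) ^ 2 + mm y * (φm y - φg y) ^ 2 + mg y * (φp y - φm y) ^ 2) μg)
    (hzero :
      (∫ x in Ωp, (EuclideanSpace.equiv (Fin d) ℝ (gradient φp x)) ⬝ᵥ
        (kp x *ᵥ (EuclideanSpace.equiv (Fin d) ℝ (gradient φp x))))
      + (∫ x in Ωm, (EuclideanSpace.equiv (Fin d) ℝ (gradient φm x)) ⬝ᵥ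
        (km x *ᵥ (EuclideanSpace.equiv (Fin d) ℝ (gradient φm x))))
      + (∫ y, (mp y * (φp y - φg y) ^ 2 + mm y * (φm y - φg y) ^ 2
          + mg y * (φp y - φm y) ^ 2) ∂μg) = 0) :
    ∃ c : ℝ, (∀ x ∈ closure Ωp, φp x = c) ∧ (∀ x ∈ closure Ωm, φm x = c) ∧
      (∀ᵐ y ∂μg, φg y = c) :=
  dissipation_form_kernel_characterization_general d Ωp Ωm hΩp_open hΩp_conn hΩm_open hΩm_conn Γ hΓ
    μg hμg_ne hμg_supp φp φm φg hφp_cont hφp_diff hφm_cont hφm_diff kp km k₀ hk₀ hkp hkm mp mm mg m₀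
    hm₀ hmm hmp hmg hint_p hint_m hint_g hzero
end
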